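/- arXiv:1108.2403 — 4 statements merged into one kernel-verified Lean document; each statement's English description precedes it below -/
import Mathlib

section
/- Let G be a finitely L-presented group and let U be a subgroup of G of finite index. Then U is finitely L-presented. -/
/-- The kernel of a finite `L`-presentation: the normal closure in the free group of
`Q ∪ ⋃_{σ ∈ Φ*} σ(R)`, where `Φ*` is the submonoid of `End(F)` generated by `Φ`. -/
def lpresKernel {X : Type} (Q R : Set (FreeGroup X))
    (Φ : Set (Monoid.End (FreeGroup X))) : Subgroup (FreeGroup X) :=
  Subgroup.normalClosure (Q ∪ ⋃ σ ∈ Submonoid.closure Φ, ⇑σ '' R)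

instance lpresKernel_normal {X : Type} (Q R : Set (FreeGroup X))
    (Φ : Set (Monoid.End (FreeGroup X))) : (lpresKernel Q R Φ).Normal :=
  Subgroup.normalClosure_normal

/-- A group is finitely `L`-presented if it is isomorphic to the group presented by a
finite `L`-presentation `(X, Q, Φ, R)`. -/
def IsFinitelyLPresented (G : Type*) [Group G] : Prop :=
  ∃ (n : ℕ) (Q R : Finset (FreeGroup (Fin n)))
    (Φ : Finset (Monoid.End (FreeGroup (Fin n)))),
    Nonempty (G ≃* FreeGroup (Fin n) ⧸ lpresKernel (Q : Set _) (R : Set _) (Φ : Set _))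

/-- A group is invariantly finitely `L`-presented if it admits a finite `L`-presentation
`(X, Q, Φ, R)` such that each `σ ∈ Φ` leaves the kernel `N` invariant. -/
def IsInvariantlyFinitelyLPresented (G : Type*) [Group G] : Prop :=
  ∃ (n : ℕ) (Q R : Finset (FreeGroup (Fin n)))
    (Φ : Finset (Monoid.End (FreeGroup (Fin n)))),
    (∀ σ ∈ Φ, ∀ g ∈ lpresKernel (Q : Set _) (R : Set _) (Φ : Set _),
        σ g ∈ lpresKernel (Q : Set _) (R : Set _) (Φ : Set _)) ∧
    Nonempty (G ≃* FreeGroup (Fin n) ⧸ lpresKernel (Q : Set _) (R : Set _) (Φ : Set _))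


/-!
Write `G = F/N` with `F` free of finite rank and `N = lpresKernel Q R Φ`, and let `V ≤ F` be
the preimage of `U`, so that `U ≅ V/N`. The subgroups of `F` of index at most `[F : V]` form a
finite family that is closed under preimages along endomorphisms of `F`, and each member is
free of finite rank (Nielsen–Schreier and Schreier). In the free product of all members, `V/N`
is presented by
* the fixed relators `t q t⁻¹` (`q ∈ Q`, `t` in a finite right transversal `T` of `V`) in the
  factor `V`, together with the generators of all other factors;
* the iterated relators `R`, placed in every factor;
* for `σ ∈ Φ ∪ {conjugation by t | t ∈ T}` and each member `B`, the endomorphism mapping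
  the factor `σ⁻¹(B)` to `B` via `σ` and killing the other factors.
Composites of these endomorphisms realise `r ↦ t σ(r) t⁻¹` for all `σ ∈ Φ*`, which is why the
family has to contain every `σ⁻¹(V)`.
-/

section GroupTheory

variable {G : Type*} [Group G]

instance MonoidHom.finite_of_fg {M : Type*} [Monoid M] [Group.FG G] [Finite M] :
    Finite (G →* M) := by
  obtain ⟨S, hS, hSfin⟩ := Group.fg_iff.mp ‹Group.FG G›
  have := hSfin.to_subtype
  exact Finite.of_injective (fun f : G →* M => fun s : S => f s) fun f g hfg =>
    MonoidHom.eq_of_eqOn_dense hS fun s hs => congrFun hfg ⟨s, hs⟩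

theorem Subgroup.finite_setOf_index_le [Group.FG G] (k : ℕ) :
    {H : Subgroup G | H.FiniteIndex ∧ H.index ≤ k}.Finite := by
  refine (Set.finite_range fun p : (G →* Equiv.Perm (Fin k)) × Fin k =>
    (MulAction.stabilizer (Equiv.Perm (Fin k)) p.2).comap p.1).subset ?_
  rintro H ⟨hH, hk⟩
  let e : G ⧸ H ↪ Fin k := (Finite.equivFin (G ⧸ H)).toEmbedding.trans (Fin.castLEEmb hk)
  refine ⟨((Equiv.Perm.viaEmbeddingHom e).comp (MulAction.toPermHom G (G ⧸ H)),
    e ((1 : G) : G ⧸ H)), ?_⟩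
  ext g
  simp [Equiv.Perm.viaEmbeddingHom_apply, Equiv.Perm.viaEmbedding_apply, QuotientGroup.eq]

theorem Subgroup.index_comap_le {G' : Type*} [Group G'] (f : G' →* G) (H : Subgroup G)
    [H.FiniteIndex] : (H.comap f).index ≤ H.index := by
  rw [index_comap, ← relIndex_top_right]
  exact relIndex_le_of_le_right le_top (H.relIndex_top_right ▸ FiniteIndex.index_ne_zero)

instance Subgroup.finiteIndex_comap {G' : Type*} [Group G'] (f : G' →* G) (H : Subgroup G)
    [H.FiniteIndex] : (H.comap f).FiniteIndex := by
  rw [finiteIndex_iff, index_comap]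
  exact fun h =>
    FiniteIndex.index_ne_zero (H.relIndex_top_right ▸ relIndex_eq_zero_of_le_right le_top h)

def Monoid.End.conj (g : G) : Monoid.End G :=
  (MulAut.conj g).toMonoidHom

theorem Subgroup.exists_finite_mul_inv_mem (V : Subgroup G) [V.FiniteIndex] :
    ∃ T : Set G, T.Finite ∧ ∀ g, ∃ t ∈ T, g * t⁻¹ ∈ V := by
  refine ⟨Set.range fun q : G ⧸ V => q.out⁻¹, Set.finite_range _, fun g => ?_⟩
  obtain ⟨h, hh⟩ := QuotientGroup.mk_out_eq_mul V g⁻¹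
  exact ⟨_, ⟨(g⁻¹ : G), rfl⟩, by simp [hh]⟩

theorem Subgroup.normalClosure_le_of_conj_mem {S T : Set G} {V L : Subgroup G}
    (hT : ∀ g, ∃ t ∈ T, g * t⁻¹ ∈ V) (hVL : V ≤ normalizer (L : Set G))
    (hS : ∀ t ∈ T, ∀ s ∈ S, t * s * t⁻¹ ∈ L) : normalClosure S ≤ L := by
  refine (closure_le _).mpr fun x hx => ?_
  obtain ⟨s, hs, hsx⟩ := Group.mem_conjugatesOfSet_iff.mp hx
  obtain ⟨g, rfl⟩ := isConj_iff.mp hsx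
  obtain ⟨t, ht, hgt⟩ := hT g
  have := (mem_normalizer_iff.mp (hVL hgt) _).mp (hS t ht s hs)
  simpa [mul_assoc] using this

theorem IsFreeGroup.finite_generators (F : Type*) [Group F] [IsFreeGroup F] [Group.FG F] :
    Finite (IsFreeGroup.Generators F) := by
  have : Group.FG (Abelianization (FreeGroup (Generators F))) :=
    Group.fg_of_surjective (f := Abelianization.of.comp (IsFreeGroup.toFreeGroup F).toMonoidHom)
      (QuotientGroup.mk_surjective.comp (IsFreeGroup.toFreeGroup F).surjective)
  have : Module.Finite ℤ (FreeAbelianGroup (Generators F)) :=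
    Module.Finite.iff_addGroup_fg.mpr (AddGroup.fg_iff_mul_fg.mpr this)
  exact Module.Finite.finite_basis (FreeAbelianGroup.basis _)

end GroupTheory

theorem IsFinitelyLPresented.of_mulEquiv {H K : Type*} [Group H] [Group K]
    (h : IsFinitelyLPresented H) (e : K ≃* H) : IsFinitelyLPresented K := by
  obtain ⟨n, Q, R, Φ, ⟨f⟩⟩ := h
  exact ⟨n, Q, R, Φ, ⟨e.trans f⟩⟩

def MulEquiv.conjEnd {M N : Type*} [Monoid M] [Monoid N] (e : M ≃* N) :
    _root_.Monoid.End M →* _root_.Monoid.End N where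
  toFun σ := (e.toMonoidHom.comp σ).comp e.symm.toMonoidHom
  map_one' := by ext; exact e.apply_symm_apply _
  map_mul' σ τ := by ext; exact congrArg e (congrArg σ (e.symm_apply_apply _).symm)

@[simp]
theorem MulEquiv.conjEnd_apply {M N : Type*} [Monoid M] [Monoid N] (e : M ≃* N)
    (σ : _root_.Monoid.End M) (x : N) : e.conjEnd σ x = e (σ (e.symm x)) :=
  rfl

section lpresKernel

variable {X : Type} {Q R : Set (FreeGroup X)} {Φ : Set (Monoid.End (FreeGroup X))}

theorem normalClosure_le_lpresKernel {S : Set (FreeGroup X)} (h : S ⊆ Q) :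
    Subgroup.normalClosure S ≤ lpresKernel Q R Φ :=
  Subgroup.normalClosure_mono (h.trans Set.subset_union_left)

theorem mem_lpresKernel_of_mem_left {q : FreeGroup X} (hq : q ∈ Q) :
    q ∈ lpresKernel Q R Φ :=
  Subgroup.subset_normalClosure (Or.inl hq)

theorem apply_mem_lpresKernel {σ : Monoid.End (FreeGroup X)} (hσ : σ ∈ Submonoid.closure Φ)
    {r : FreeGroup X} (hr : r ∈ R) : σ r ∈ lpresKernel Q R Φ :=
  Subgroup.subset_normalClosure (Or.inr (Set.mem_biUnion hσ ⟨r, hr, rfl⟩))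

theorem mem_lpresKernel_of_mem_right {r : FreeGroup X} (hr : r ∈ R) : r ∈ lpresKernel Q R Φ :=
  apply_mem_lpresKernel (Submonoid.one_mem _) hr

theorem lpresKernel_le {N : Subgroup (FreeGroup X)} [N.Normal] (hQ : Q ⊆ N)
    (hR : ∀ σ ∈ Submonoid.closure Φ, ∀ r ∈ R, σ r ∈ N) : lpresKernel Q R Φ ≤ N := by
  refine Subgroup.normalClosure_le_normal (Set.union_subset hQ ?_)
  simp only [Set.iUnion_subset_iff, Set.image_subset_iff]
  exact fun σ hσ r hr => hR σ hσ r hr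

theorem lpresKernel_mono_left {Q' : Set (FreeGroup X)} (h : Q ⊆ Q') :
    lpresKernel Q R Φ ≤ lpresKernel Q' R Φ :=
  Subgroup.normalClosure_mono (Set.union_subset_union_left _ h)

theorem apply_mem_lpresKernel_empty {φ : Monoid.End (FreeGroup X)} (hφ : φ ∈ Φ)
    {g : FreeGroup X} (hg : g ∈ lpresKernel ∅ R Φ) : φ g ∈ lpresKernel ∅ R Φ := by
  have : ((lpresKernel ∅ R Φ).comap φ).Normal := Subgroup.Normal.comap inferInstance φ
  refine lpresKernel_le (N := (lpresKernel ∅ R Φ).comap φ) (Set.empty_subset _)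
    (fun σ hσ r hr => ?_) hg
  exact apply_mem_lpresKernel (Submonoid.mul_mem _ (Submonoid.subset_closure hφ) hσ) hr

theorem lpresKernel_map_mulEquiv {Y : Type} (e : FreeGroup X ≃* FreeGroup Y) :
    (lpresKernel Q R Φ).map (e : FreeGroup X →* FreeGroup Y) =
      lpresKernel (e '' Q) (e '' R) (e.conjEnd '' Φ) := by
  rw [lpresKernel, Subgroup.map_normalClosure _ _ e.surjective, lpresKernel,
    ← MonoidHom.map_mclosure, Set.image_union]
  congr 2
  ext x
  simp only [Set.mem_image, Set.mem_iUnion, Submonoid.mem_map, exists_prop]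
  constructor
  · rintro ⟨_, ⟨σ, hσ, r, hr, rfl⟩, rfl⟩
    exact ⟨_, ⟨σ, hσ, rfl⟩, _, ⟨r, hr, rfl⟩, by simp⟩
  · rintro ⟨_, ⟨σ, hσ, rfl⟩, _, ⟨r, hr, rfl⟩, rfl⟩
    exact ⟨σ r, ⟨σ, hσ, r, hr, rfl⟩, by simp⟩

theorem isFinitelyLPresented_quotient_lpresKernel [Finite X] (hQ : Q.Finite) (hR : R.Finite)
    (hΦ : Φ.Finite) : IsFinitelyLPresented (FreeGroup X ⧸ lpresKernel Q R Φ) := by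
  let e := FreeGroup.freeGroupCongr (Finite.equivFin X)
  refine ⟨_, (hQ.image e).toFinset, (hR.image e).toFinset, (hΦ.image e.conjEnd).toFinset,
    ⟨QuotientGroup.congr _ _ e ?_⟩⟩
  simpa only [Set.Finite.coe_toFinset] using lpresKernel_map_mulEquiv e

end lpresKernel

noncomputable section FreeCoprod

variable {ι : Type} (W : ι → Type) [∀ i, Group (W i)] [∀ i, IsFreeGroup (W i)]

abbrev FreeCoprod : Type := FreeGroup (Σ i, IsFreeGroup.Generators (W i))

namespace FreeCoprod

def inj (i : ι) : W i →* FreeCoprod W :=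
  IsFreeGroup.lift fun b => FreeGroup.of ⟨i, b⟩

open Classical in
def proj (i : ι) : FreeCoprod W →* W i :=
  (Pi.evalMonoidHom W i).comp (FreeGroup.lift fun y => Pi.mulSingle y.1 (IsFreeGroup.of y.2))

variable {W}

theorem inj_of (i : ι) (b : IsFreeGroup.Generators (W i)) :
    inj W i (IsFreeGroup.of b) = FreeGroup.of ⟨i, b⟩ :=
  IsFreeGroup.lift_of _ _

open Classical in
theorem proj_inj (i j : ι) (w : W j) : proj W i (inj W j w) = Pi.mulSingle j w i := by
  have : (proj W i).comp (inj W j) = (Pi.evalMonoidHom W i).comp (MonoidHom.mulSingle W j) :=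
    IsFreeGroup.ext_hom fun b => by simp [proj, inj_of]
  exact DFunLike.congr_fun this w

@[simp]
theorem proj_inj_self (i : ι) (w : W i) : proj W i (inj W i w) = w := by
  classical
  rw [proj_inj]
  exact Pi.mulSingle_eq_same _ _

theorem proj_inj_of_ne {i j : ι} (h : j ≠ i) (w : W j) : proj W i (inj W j w) = 1 := by
  classical
  rw [proj_inj]
  exact Pi.mulSingle_eq_of_ne h.symm _

theorem ker_proj_le (i : ι) :
    (proj W i).ker ≤ Subgroup.normalClosure (FreeGroup.of '' {y | y.1 ≠ i}) := by
  let π := QuotientGroup.mk'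
    (Subgroup.normalClosure (FreeGroup.of '' {y : Σ j, IsFreeGroup.Generators (W j) | y.1 ≠ i}))
  have hπ : π.comp ((inj W i).comp (proj W i)) = π := by
    refine FreeGroup.ext_hom _ _ fun ⟨j, b⟩ => ?_
    rw [← inj_of]
    by_cases h : j = i
    · subst h
      simp
    · simp only [MonoidHom.comp_apply, proj_inj_of_ne h, map_one]
      rw [eq_comm, QuotientGroup.mk'_apply, QuotientGroup.eq_one_iff, inj_of]
      exact Subgroup.subset_normalClosure ⟨_, h, rfl⟩
  intro x hx
  rw [← QuotientGroup.eq_one_iff, ← QuotientGroup.mk'_apply, ← DFunLike.congr_fun hπ x]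
  simp [(MonoidHom.mem_ker).mp hx]

end FreeCoprod

end FreeCoprod

abbrev BoundedIndexSubgroup (X : Type) (k : ℕ) : Type :=
  {W : Subgroup (FreeGroup X) // W.FiniteIndex ∧ W.index ≤ k}

namespace BoundedIndexSubgroup

variable {X : Type} {k : ℕ}

instance (A : BoundedIndexSubgroup X k) : A.1.FiniteIndex := A.2.1

instance [Finite X] : Finite (BoundedIndexSubgroup X k) :=
  (Subgroup.finite_setOf_index_le k).to_subtype

instance [Finite X] : Finite (Σ A : BoundedIndexSubgroup X k, IsFreeGroup.Generators A.1) :=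
  have (A : BoundedIndexSubgroup X k) := IsFreeGroup.finite_generators A.1
  inferInstance

abbrev comap (φ : Monoid.End (FreeGroup X)) (B : BoundedIndexSubgroup X k) :
    BoundedIndexSubgroup X k :=
  ⟨B.1.comap φ, Subgroup.finiteIndex_comap (G := FreeGroup X) φ B.1,
    (B.1.index_comap_le φ).trans B.2.2⟩

abbrev SchreierGroup (X : Type) (k : ℕ) : Type :=
  FreeCoprod fun A : BoundedIndexSubgroup X k => A.1

noncomputable abbrev inj (A : BoundedIndexSubgroup X k) : A.1 →* SchreierGroup X k :=
  FreeCoprod.inj (fun A : BoundedIndexSubgroup X k => A.1) A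

noncomputable abbrev proj (A : BoundedIndexSubgroup X k) : SchreierGroup X k →* A.1 :=
  FreeCoprod.proj (fun A : BoundedIndexSubgroup X k => A.1) A

noncomputable def inducedEnd (φ : Monoid.End (FreeGroup X)) (B : BoundedIndexSubgroup X k) :
    Monoid.End (SchreierGroup X k) :=
  (inj B).comp ((φ.subgroupComap B.1).comp (proj (B.comap φ)))

theorem inducedEnd_inj_comap (φ : Monoid.End (FreeGroup X)) (B : BoundedIndexSubgroup X k)
    (w : (B.comap φ).1) :
    inducedEnd φ B (inj (B.comap φ) w) = inj B (φ.subgroupComap B.1 w) := by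
  change inj B (φ.subgroupComap B.1 (proj (B.comap φ) (inj (B.comap φ) w))) = _
  rw [FreeCoprod.proj_inj_self]

theorem inducedEnd_inj_of_ne (φ : Monoid.End (FreeGroup X)) {A B : BoundedIndexSubgroup X k}
    (h : A ≠ B.comap φ) (w : A.1) : inducedEnd φ B (inj A w) = 1 := by
  change inj B (φ.subgroupComap B.1 (proj (B.comap φ) (inj A w))) = 1
  rw [FreeCoprod.proj_inj_of_ne h, map_one, map_one]

def componentSet (S : Set (FreeGroup X)) : Set (SchreierGroup X k) :=
  ⋃ A : BoundedIndexSubgroup X k, inj A '' (A.1.subtype ⁻¹' S)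

def inducedEnds (Ψ : Set (Monoid.End (FreeGroup X))) : Set (Monoid.End (SchreierGroup X k)) :=
  Set.image2 inducedEnd Ψ Set.univ

theorem componentSet_finite [Finite X] {S : Set (FreeGroup X)} (hS : S.Finite) :
    (componentSet S : Set (SchreierGroup X k)).Finite :=
  Set.finite_iUnion fun A => (hS.preimage A.1.subtype_injective.injOn).image _

theorem inducedEnds_finite [Finite X] {Ψ : Set (Monoid.End (FreeGroup X))} (hΨ : Ψ.Finite) :
    (inducedEnds Ψ : Set (Monoid.End (SchreierGroup X k))).Finite :=
  hΨ.image2 _ Set.finite_univ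

theorem componentSet_mono {S S' : Set (FreeGroup X)} (h : S ⊆ S') :
    (componentSet S : Set (SchreierGroup X k)) ⊆ componentSet S' :=
  Set.iUnion_mono fun _ => Set.image_mono (Set.preimage_mono h)

theorem mapsTo_componentSet {Ψ : Set (Monoid.End (FreeGroup X))} {M : Subgroup (FreeGroup X)}
    (hM : ∀ ψ ∈ Ψ, Set.MapsTo ψ M M) {τ : Monoid.End (SchreierGroup X k)}
    (hτ : τ ∈ Submonoid.closure (inducedEnds Ψ)) :
    Set.MapsTo τ (componentSet M) (componentSet M) := by
  induction hτ using Submonoid.closure_induction with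
  | mem τ hτ =>
    obtain ⟨ψ, hψ, B, -, rfl⟩ := hτ
    rintro _ ⟨_, ⟨A, rfl⟩, w, hw, rfl⟩
    refine Set.mem_iUnion.mpr ⟨B, ?_⟩
    by_cases hA : A = B.comap ψ
    · subst hA
      exact ⟨_, hM ψ hψ hw, (inducedEnd_inj_comap ψ B w).symm⟩
    · exact ⟨1, M.one_mem, by rw [inducedEnd_inj_of_ne ψ hA, map_one]⟩
  | one => exact Set.mapsTo_id _
  | mul τ₁ τ₂ _ _ h₁ h₂ => exact h₁.comp h₂

theorem exists_mem_closure_inducedEnds {Ψ : Set (Monoid.End (FreeGroup X))}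
    {σ : Monoid.End (FreeGroup X)} (hσ : σ ∈ Submonoid.closure Ψ) :
    ∀ A B : BoundedIndexSubgroup X k, A.1 = B.1.comap σ →
      ∃ τ ∈ Submonoid.closure (inducedEnds Ψ), ∀ (w : A.1) (w' : B.1),
        (w' : FreeGroup X) = σ w → τ (inj A w) = inj B w' := by
  induction hσ using Submonoid.closure_induction with
  | mem σ hσ =>
    rintro A B hA
    obtain rfl : A = B.comap σ := Subtype.ext hA
    refine ⟨_, Submonoid.subset_closure ⟨σ, hσ, B, trivial, rfl⟩, fun w w' hw' => ?_⟩
    rw [inducedEnd_inj_comap]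
    exact congrArg (inj B) (Subtype.ext hw'.symm)
  | one =>
    rintro A B hA
    obtain rfl : A = B := Subtype.ext hA
    exact ⟨1, Submonoid.one_mem _, fun w w' hw' => congrArg (inj A) (Subtype.ext hw'.symm)⟩
  | mul σ₁ σ₂ _ _ ih₁ ih₂ =>
    rintro A B hA
    obtain ⟨τ₁, hτ₁, h₁⟩ := ih₁ (B.comap σ₁) B rfl
    obtain ⟨τ₂, hτ₂, h₂⟩ := ih₂ A (B.comap σ₁) (by rw [hA]; rfl)
    refine ⟨τ₁ * τ₂, Submonoid.mul_mem _ hτ₁ hτ₂, fun w w' hw' => ?_⟩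
    have hw : σ₂ w ∈ (B.comap σ₁).1 := by
      change σ₁ (σ₂ w) ∈ B.1
      exact hw' ▸ w'.2
    exact (congrArg τ₁ (h₂ w ⟨_, hw⟩ rfl)).trans (h₁ _ w' hw')

variable {Q R T : Set (FreeGroup X)} {Φ : Set (Monoid.End (FreeGroup X))}
  {V : BoundedIndexSubgroup X k}

def schreierQ (Q T : Set (FreeGroup X)) (V : BoundedIndexSubgroup X k) :
    Set (SchreierGroup X k) :=
  inj V '' (V.1.subtype ⁻¹' Set.image2 (fun t q => t * q * t⁻¹) T Q) ∪
    FreeGroup.of '' {y | y.1 ≠ V}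

abbrev schreierKernel (Q R : Set (FreeGroup X)) (Φ : Set (Monoid.End (FreeGroup X)))
    (T : Set (FreeGroup X)) (V : BoundedIndexSubgroup X k) : Subgroup (SchreierGroup X k) :=
  lpresKernel (schreierQ Q T V) (componentSet R)
    (inducedEnds (Φ ∪ Monoid.End.conj '' T))

theorem schreierQ_finite [Finite X] (hQ : Q.Finite) (hT : T.Finite) :
    (schreierQ Q T V).Finite :=
  (((hT.image2 _ hQ).preimage V.1.subtype_injective.injOn).image _).union (Set.toFinite _)

theorem proj_mem_of_mem_componentSet {M : Subgroup (FreeGroup X)} {z : SchreierGroup X k}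
    (hz : z ∈ componentSet (M : Set (FreeGroup X))) : (proj V z : FreeGroup X) ∈ M := by
  obtain ⟨A, w, hw, rfl⟩ := Set.mem_iUnion.mp hz
  by_cases hA : A = V
  · subst hA
    rwa [FreeCoprod.proj_inj_self]
  · rw [FreeCoprod.proj_inj_of_ne hA]
    exact M.one_mem

theorem proj_mem_lpresKernel {x : SchreierGroup X k} (hx : x ∈ schreierKernel Q R Φ T V) :
    (proj V x : FreeGroup X) ∈ lpresKernel Q R Φ := by
  -- Unlike `lpresKernel Q R Φ`, the normal closure of the iterated relators alone is Φ-invariant.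
  have hΨ : ∀ ψ ∈ Φ ∪ Monoid.End.conj '' T,
      Set.MapsTo ψ (lpresKernel ∅ R Φ) (lpresKernel ∅ R Φ) := by
    rintro ψ (hψ | ⟨t, -, rfl⟩) g hg
    · exact apply_mem_lpresKernel_empty hψ hg
    · exact (lpresKernel_normal ∅ R Φ).conj_mem g hg t
  refine lpresKernel_le (N := ((lpresKernel Q R Φ).subgroupOf V.1).comap (proj V)) ?_ ?_ hx
  · rintro _ (⟨w, ⟨t, -, q, hq, hw⟩, rfl⟩ | ⟨y, hy, rfl⟩)
    · simp only [SetLike.mem_coe, Subgroup.mem_comap, Subgroup.mem_subgroupOf,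
        FreeCoprod.proj_inj_self]
      change V.1.subtype w ∈ _
      rw [← hw]
      exact (lpresKernel_normal Q R Φ).conj_mem q (mem_lpresKernel_of_mem_left hq) t
    · rw [SetLike.mem_coe, Subgroup.mem_comap, ← FreeCoprod.inj_of,
        FreeCoprod.proj_inj_of_ne hy]
      exact one_mem _
  · intro τ hτ z hz
    have hRM : R ⊆ lpresKernel ∅ R Φ := fun r => mem_lpresKernel_of_mem_right
    exact lpresKernel_mono_left (Set.empty_subset Q)
      (proj_mem_of_mem_componentSet (mapsTo_componentSet hΨ hτ (componentSet_mono hRM hz)))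

theorem inj_mem_schreierKernel (hT : ∀ g, ∃ t ∈ T, g * t⁻¹ ∈ V.1)
    (hNV : lpresKernel Q R Φ ≤ V.1) {v : V.1} (hv : (v : FreeGroup X) ∈ lpresKernel Q R Φ) :
    inj V v ∈ schreierKernel Q R Φ T V := by
  set K := schreierKernel Q R Φ T V
  set L := (K.comap (inj V)).map V.1.subtype
  suffices hNL : lpresKernel Q R Φ ≤ L by
    obtain ⟨w, hw, hwv⟩ := hNL hv
    rwa [← Subtype.ext hwv]
  have hVL : V.1 ≤ Subgroup.normalizer (L : Set (FreeGroup X)) :=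
    calc V.1 = (Subgroup.normalizer (K.comap (inj V) : Set V.1)).map V.1.subtype := by
          rw [Subgroup.normalizer_eq_top, ← MonoidHom.range_eq_map, Subgroup.range_subtype]
      _ ≤ _ := Subgroup.le_normalizer_map _
  refine Subgroup.normalClosure_le_of_conj_mem hT hVL ?_
  rintro t ht s (hs | hs)
  · have hmem : t * s * t⁻¹ ∈ V.1 :=
      hNV ((lpresKernel_normal Q R Φ).conj_mem s (mem_lpresKernel_of_mem_left hs) t)
    exact ⟨⟨_, hmem⟩,
      mem_lpresKernel_of_mem_left (Or.inl ⟨_, ⟨t, ht, s, hs, rfl⟩, rfl⟩), rfl⟩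
  · obtain ⟨σ, hσ, r, hr, rfl⟩ : ∃ σ ∈ Submonoid.closure Φ, ∃ r ∈ R, σ r = s := by
      simpa using hs
    -- `t σ(r) t⁻¹` is the image of the relator `r` of the component `σ'⁻¹(V)` under `σ'`.
    set σ' := Monoid.End.conj t * σ
    have hσ' : σ' ∈ Submonoid.closure (Φ ∪ Monoid.End.conj '' T) :=
      Submonoid.mul_mem _ (Submonoid.subset_closure (Or.inr ⟨t, ht, rfl⟩))
        (Submonoid.closure_mono Set.subset_union_left hσ)
    have hmem : σ' r ∈ V.1 :=
      hNV ((lpresKernel_normal Q R Φ).conj_mem _ (apply_mem_lpresKernel hσ hr) t)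
    obtain ⟨τ, hτ, hτr⟩ := exists_mem_closure_inducedEnds hσ' (V.comap σ') V rfl
    refine ⟨⟨_, hmem⟩, ?_, rfl⟩
    rw [SetLike.mem_coe, Subgroup.mem_comap, ← hτr ⟨r, hmem⟩ ⟨_, hmem⟩ rfl]
    exact apply_mem_lpresKernel hτ (Set.mem_iUnion.mpr ⟨V.comap σ', ⟨r, hmem⟩, hr, rfl⟩)

theorem schreierKernel_eq (hT : ∀ g, ∃ t ∈ T, g * t⁻¹ ∈ V.1)
    (hNV : lpresKernel Q R Φ ≤ V.1) :
    schreierKernel Q R Φ T V = ((lpresKernel Q R Φ).subgroupOf V.1).comap (proj V) := by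
  refine le_antisymm (fun x => proj_mem_lpresKernel) fun x hx => ?_
  have hker : x * (inj V (proj V x))⁻¹ ∈ schreierKernel Q R Φ T V := by
    refine normalClosure_le_lpresKernel Set.subset_union_right (FreeCoprod.ker_proj_le V ?_)
    simp
  simpa using mul_mem hker (inj_mem_schreierKernel hT hNV hx)

end BoundedIndexSubgroup

open BoundedIndexSubgroup in
theorem isFinitelyLPresented_quotient_subgroupOf {X : Type} [Finite X]
    {Q R : Set (FreeGroup X)} {Φ : Set (Monoid.End (FreeGroup X))}
    (hQ : Q.Finite) (hR : R.Finite) (hΦ : Φ.Finite) (V : Subgroup (FreeGroup X)) [V.FiniteIndex]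
    (hNV : lpresKernel Q R Φ ≤ V) :
    IsFinitelyLPresented (V ⧸ (lpresKernel Q R Φ).subgroupOf V) := by
  obtain ⟨T, hTfin, hT⟩ := V.exists_finite_mul_inv_mem
  let V' : BoundedIndexSubgroup X V.index := ⟨V, inferInstance, le_rfl⟩
  let θ := (QuotientGroup.mk' ((lpresKernel Q R Φ).subgroupOf V)).comp (proj V')
  have hθ : θ.ker = schreierKernel Q R Φ T V' := by
    rw [schreierKernel_eq hT hNV, ← MonoidHom.comap_ker, QuotientGroup.ker_mk']
  have hθ_surj : Function.Surjective θ :=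
    (QuotientGroup.mk'_surjective _).comp fun v => ⟨inj V' v, by simp⟩
  exact (isFinitelyLPresented_quotient_lpresKernel (schreierQ_finite hQ hTfin)
    (componentSet_finite hR) (inducedEnds_finite (hΦ.union (hTfin.image _)))).of_mulEquiv
    ((QuotientGroup.quotientKerEquivOfSurjective θ hθ_surj).symm.trans
      (QuotientGroup.quotientMulEquivOfEq hθ))

noncomputable def MonoidHom.comapQuotientKerEquiv {G H : Type*} [Group G] [Group H]
    (f : G →* H) (hf : Function.Surjective f) (U : Subgroup H) :
    U.comap f ⧸ f.ker.subgroupOf (U.comap f) ≃* U :=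
  (QuotientGroup.quotientMulEquivOfEq
    (by ext x; exact OneMemClass.coe_eq_one (x := f.subgroupComap U x))).trans
    (QuotientGroup.quotientKerEquivOfSurjective (f.subgroupComap U)
      (f.subgroupComap_surjective_of_surjective U hf))

/-- **Reidemeister–Schreier for finitely L-presented groups** (Theorem 1.1):
each finite index subgroup of a finitely `L`-presented group is itself
finitely `L`-presented. -/
theorem finiteIndex_subgroup_isFinitelyLPresented
    {G : Type*} [Group G] (hG : IsFinitelyLPresented G)
    (U : Subgroup G) (hU : U.FiniteIndex) :
    IsFinitelyLPresented U := by
  obtain ⟨n, Q, R, Φ, ⟨e⟩⟩ := hG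
  let f : FreeGroup (Fin n) →* G := e.symm.toMonoidHom.comp (QuotientGroup.mk' _)
  have hf : Function.Surjective f := e.symm.surjective.comp (QuotientGroup.mk'_surjective _)
  have hker : f.ker = lpresKernel Q R Φ := by
    rw [MonoidHom.ker_comp_of_injective _ _ e.symm.injective, QuotientGroup.ker_mk']
  exact (isFinitelyLPresented_quotient_subgroupOf Q.finite_toSet R.finite_toSet Φ.finite_toSet
    (U.comap f) (hker ▸ f.ker_le_comap U)).of_mulEquiv
    ((f.comapQuotientKerEquiv hf U).symm.trans
      (QuotientGroup.quotientMulEquivOfEq (by rw [hker])))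
end

section
/- Let (X, Q, Φ, R) be an invariant finite L-presentation of G = F/N, where F is the free group on the finite set X, N is the normal closure in F of Q ∪ ⋃_{σ∈Φ*} σ(R), and σ(N) ⊆ N for all σ ∈ Φ. Let H ≤ F be a subgroup of finite index with N ⊆ H, and let φ : F → Sym(H\F) be the permutation representation of F on the right cosets of H. For a word w = ψ₁ψ₂⋯ψ_n over Φ let ŵ ∈ End(F) denote the composite endomorphism obtained by applying ψ₁ first, then ψ₂, and so on. Suppose there is a finite set V of words over Φ which contains the empty word, is closed under deleting its first letter, is such that v ↦ φ∘v̂ is injective on V, such that every word w over Φ satisfies φ∘ŵ = φ∘v̂ for some v ∈ V, and such that for every ψ ∈ Φ and every δ ∈ V with the word ψδ not in V one has φ∘(ψδ)̂ = φ (the subgroup H/N of G is then called leaf-invariant). Then H/N is invariantly finitely L-presented. -/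
/-- The permutation representation of a group `F` on the right cosets `H\F` of a
subgroup `H`, induced by right multiplication.  (With Mathlib's convention that
permutations compose right-to-left, the element `g` acts on a right coset `Hx`
as `Hx ↦ Hxg⁻¹`, which makes `g ↦ (Hx ↦ Hxg)` into a monoid homomorphism when
read in the usual left-to-right convention for permutation actions.) -/
def rightCosetRep {F : Type*} [Group F] (H : Subgroup F) :
    F →* Equiv.Perm (Quotient (QuotientGroup.rightRel H)) where
  toFun g :=
    { toFun := Quotient.map' (· * g⁻¹) fun a b hab => by
        rw [QuotientGroup.rightRel_apply] at hab ⊢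
        simpa [mul_assoc] using hab
      invFun := Quotient.map' (· * g) fun a b hab => by
        rw [QuotientGroup.rightRel_apply] at hab ⊢
        simpa [mul_assoc] using hab
      left_inv := fun q => Quotient.inductionOn' q fun a => by
        simp [Quotient.map'_mk'', mul_assoc]
      right_inv := fun q => Quotient.inductionOn' q fun a => by
        simp [Quotient.map'_mk'', mul_assoc] }
  map_one' := by
    ext q
    exact Quotient.inductionOn' q fun a => by simp [Quotient.map'_mk'']
  map_mul' x y := by
    ext q
    exact Quotient.inductionOn' q fun a => by simp [Quotient.map'_mk'', mul_assoc]

/-- For a word `w = [ψ₁, ψ₂, …, ψₙ]` over the endomorphisms of `F`, the composite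
endomorphism obtained by applying `ψ₁` first, then `ψ₂`, and so on. -/
def wordHat {F : Type*} [Group F] (w : List (Monoid.End F)) : Monoid.End F :=
  w.reverse.prod

def lKernel {G : Type*} [Group G] (Q R : Set G) (Φ : Set (Monoid.End G)) : Subgroup G :=
  Subgroup.normalClosure (Q ∪ ⋃ σ ∈ Submonoid.closure Φ, ⇑σ '' R)

instance lKernel_normal {G : Type*} [Group G] (Q R : Set G) (Φ : Set (Monoid.End G)) :
    (lKernel Q R Φ).Normal :=
  Subgroup.normalClosure_normal

theorem lpresKernel_eq_lKernel {X : Type} (Q R : Set (FreeGroup X))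
    (Φ : Set (Monoid.End (FreeGroup X))) : lpresKernel Q R Φ = lKernel Q R Φ :=
  rfl

namespace Subgroup

variable {G : Type*} [Group G]

def invariantEnd (K : Subgroup G) : Submonoid (Monoid.End G) where
  carrier := {σ | ∀ g ∈ K, σ g ∈ K}
  mul_mem' hσ hτ g hg := hσ _ (hτ g hg)
  one_mem' _ := id

def restrictEnd (K : Subgroup G) : K.invariantEnd →* Monoid.End K where
  toFun σ := ((σ.1 : G →* G).comp K.subtype).codRestrict K fun x => σ.2 x x.2
  map_one' := rfl
  map_mul' _ _ := rfl

@[simp]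
theorem coe_restrictEnd_apply (K : Subgroup G) (σ : K.invariantEnd) (x : K) :
    (K.restrictEnd σ x : G) = σ.1 x :=
  rfl

theorem restrictEnd_mem_invariantEnd_subgroupOf {K N : Subgroup G} {σ : K.invariantEnd}
    (hσ : σ.1 ∈ N.invariantEnd) : K.restrictEnd σ ∈ (N.subgroupOf K).invariantEnd :=
  fun g hg => hσ g hg

theorem exists_restrictEnd_eq_of_mem_closure {K : Subgroup G} {L : Set (Monoid.End G)}
    {ρ : Monoid.End K} (hρ : ρ ∈ Submonoid.closure (K.restrictEnd '' (Subtype.val ⁻¹' L))) :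
    ∃ σ : K.invariantEnd, σ.1 ∈ Submonoid.closure L ∧ K.restrictEnd σ = ρ := by
  rw [← MonoidHom.map_mclosure] at hρ
  obtain ⟨σ, hσ, rfl⟩ := hρ
  refine ⟨σ, ?_, rfl⟩
  have : σ.1 ∈ (Submonoid.closure (Subtype.val ⁻¹' L)).map K.invariantEnd.subtype := ⟨σ, hσ, rfl⟩
  rw [MonoidHom.map_mclosure] at this
  exact Submonoid.closure_mono (Set.image_preimage_subset _ _) this

theorem restrictEnd_mem_closure_image {K : Subgroup G} {L : Set (Monoid.End G)}
    (hL : L ⊆ K.invariantEnd) {σ : K.invariantEnd} (hσ : σ.1 ∈ Submonoid.closure L) :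
    K.restrictEnd σ ∈ Submonoid.closure (K.restrictEnd '' (Subtype.val ⁻¹' L)) := by
  rw [← MonoidHom.map_mclosure]
  have hL' : K.invariantEnd.subtype '' (Subtype.val ⁻¹' L) = L :=
    Set.image_preimage_eq_of_subset (by simpa using hL)
  rw [← hL', ← MonoidHom.map_mclosure] at hσ
  obtain ⟨τ, hτ, hτσ⟩ := hσ
  exact ⟨τ, hτ, by rw [Subtype.ext hτσ]⟩

end Subgroup

namespace MonoidHom

variable {G M : Type*} [Group G] [Monoid M]

def endStabilizer (φ : G →* M) : Submonoid (Monoid.End G) where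
  carrier := {σ | φ.comp σ = φ}
  mul_mem' {σ τ} hσ hτ := by
    ext x
    exact (DFunLike.congr_fun hσ (τ x)).trans (DFunLike.congr_fun hτ x)
  one_mem' := φ.comp_id

end MonoidHom

section RightCosets

variable {G : Type*} [Group G] {H : Subgroup G}

theorem mul_inv_mem_of_mem_endStabilizer {σ : Monoid.End G}
    (hσ : σ ∈ (rightCosetRep H).endStabilizer) (x : G) : σ x * x⁻¹ ∈ H := by
  have hx : rightCosetRep H (σ x) (Quotient.mk'' x) = rightCosetRep H x (Quotient.mk'' x) :=
    congrArg (fun π : Equiv.Perm _ => π (Quotient.mk'' x)) (DFunLike.congr_fun hσ x)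
  have := QuotientGroup.rightRel_apply.mp (Quotient.eq''.mp hx)
  simpa [mul_assoc] using this

theorem endStabilizer_rightCosetRep_le_invariantEnd :
    (rightCosetRep H).endStabilizer ≤ H.invariantEnd := fun σ hσ x hx => by
  simpa using mul_mem (mul_inv_mem_of_mem_endStabilizer hσ x) hx

theorem Subgroup.exists_finite_forall_mul_inv_mem (H : Subgroup G) [H.FiniteIndex] :
    ∃ T : Set G, T.Finite ∧ ∀ g, ∃ t ∈ T, g * t⁻¹ ∈ H := by
  refine ⟨Set.range fun q : G ⧸ H => q.out⁻¹, Set.finite_range _,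
    fun g => ⟨_, ⟨((g⁻¹ : G) : G ⧸ H), rfl⟩, ?_⟩⟩
  obtain ⟨h, hh⟩ := QuotientGroup.mk_out_eq_mul H g⁻¹
  simp [hh]

theorem Subgroup.normalClosure_le_of_forall_conj_mem {H K : Subgroup G} {S T : Set G}
    (hT : ∀ g, ∃ t ∈ T, g * t⁻¹ ∈ H) (hK : ∀ h ∈ H, ∀ k ∈ K, h * k * h⁻¹ ∈ K)
    (hS : ∀ t ∈ T, ∀ s ∈ S, t * s * t⁻¹ ∈ K) : Subgroup.normalClosure S ≤ K := by
  refine (Subgroup.closure_le K).mpr fun x hx => ?_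
  obtain ⟨s, hs, hsx⟩ := Group.mem_conjugatesOfSet_iff.mp hx
  obtain ⟨g, rfl⟩ := isConj_iff.mp hsx
  obtain ⟨t, ht, hgt⟩ := hT g
  have := hK _ hgt _ (hS t ht s hs)
  simpa [mul_assoc] using this

end RightCosets

theorem List.exists_eq_append_cons_of_not_mem {α : Type*} {V : Set (List α)} (hV : [] ∈ V) :
    ∀ {w : List α}, w ∉ V → ∃ u ψ δ, w = u ++ ψ :: δ ∧ δ ∈ V ∧ ψ :: δ ∉ V
  | [], hw => absurd hV hw
  | ψ :: w, hw => by
    by_cases hwV : w ∈ V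
    · exact ⟨[], ψ, w, rfl, hwV, hw⟩
    · obtain ⟨u, ψ', δ, rfl, hδ, hψδ⟩ := exists_eq_append_cons_of_not_mem hV hwV
      exact ⟨ψ :: u, ψ', δ, rfl, hδ, hψδ⟩

section Words

variable {F : Type*} [Group F] {Φ : Set (Monoid.End F)} {V : Set (List (Monoid.End F))}

theorem wordHat_append (a b : List (Monoid.End F)) : wordHat (a ++ b) = wordHat b * wordHat a := by
  simp [wordHat]

theorem wordHat_mem_closure {w : List (Monoid.End F)} (hw : ∀ ψ ∈ w, ψ ∈ Φ) :
    wordHat w ∈ Submonoid.closure Φ :=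
  Submonoid.list_prod_mem _ fun ψ hψ => Submonoid.subset_closure (hw ψ (List.mem_reverse.mp hψ))

theorem exists_wordHat_eq_of_mem_closure {σ : Monoid.End F} (hσ : σ ∈ Submonoid.closure Φ) :
    ∃ w : List (Monoid.End F), (∀ ψ ∈ w, ψ ∈ Φ) ∧ wordHat w = σ := by
  obtain ⟨l, hl, rfl⟩ := Submonoid.exists_list_of_mem_closure hσ
  exact ⟨l.reverse, fun ψ hψ => hl ψ (List.mem_reverse.mp hψ), by simp [wordHat]⟩

def leafEnds (Φ : Set (Monoid.End F)) (V : Set (List (Monoid.End F))) : Set (Monoid.End F) :=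
  {σ | ∃ ψ ∈ Φ, ∃ δ ∈ V, ψ :: δ ∉ V ∧ wordHat (ψ :: δ) = σ}

theorem leafEnds_finite (hΦ : Φ.Finite) (hV : V.Finite) : (leafEnds Φ V).Finite :=
  (hΦ.image2 (fun ψ δ => wordHat (ψ :: δ)) hV).subset fun _ ⟨ψ, hψ, δ, hδ, _, hσ⟩ =>
    ⟨ψ, hψ, δ, hδ, hσ⟩

theorem leafEnds_subset_closure (hVΦ : ∀ w ∈ V, ∀ ψ ∈ w, ψ ∈ Φ) :
    leafEnds Φ V ⊆ Submonoid.closure Φ := by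
  rintro _ ⟨ψ, hψ, δ, hδ, -, rfl⟩
  exact wordHat_mem_closure (List.forall_mem_cons.mpr ⟨hψ, hVΦ δ hδ⟩)

theorem exists_wordHat_eq_mul_wordHat (hV : [] ∈ V) (w : List (Monoid.End F))
    (hw : ∀ ψ ∈ w, ψ ∈ Φ) :
    ∃ β ∈ Submonoid.closure (leafEnds Φ V), ∃ v ∈ V, wordHat w = β * wordHat v := by
  by_cases hwV : w ∈ V
  · exact ⟨1, one_mem _, w, hwV, (one_mul _).symm⟩
  obtain ⟨u, ψ, δ, rfl, hδ, hψδ⟩ := List.exists_eq_append_cons_of_not_mem hV hwV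
  have hleaf : wordHat (ψ :: δ) ∈ leafEnds Φ V := ⟨ψ, hw ψ (by simp), δ, hδ, hψδ, rfl⟩
  obtain ⟨β, hβ, v, hv, huv⟩ := exists_wordHat_eq_mul_wordHat hV u fun ψ hψ => hw ψ (by simp [hψ])
  exact ⟨wordHat (ψ :: δ) * β, mul_mem (Submonoid.subset_closure hleaf) hβ, v, hv, by
    rw [wordHat_append, huv, mul_assoc]⟩
termination_by w.length
decreasing_by simp_all

theorem exists_eq_mul_of_mem_closure (hV : [] ∈ V) {σ : Monoid.End F}
    (hσ : σ ∈ Submonoid.closure Φ) :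
    ∃ β ∈ Submonoid.closure (leafEnds Φ V), ∃ p ∈ wordHat '' V, σ = β * p := by
  obtain ⟨w, hw, rfl⟩ := exists_wordHat_eq_of_mem_closure hσ
  obtain ⟨β, hβ, v, hv, hwv⟩ := exists_wordHat_eq_mul_wordHat hV w hw
  exact ⟨β, hβ, _, ⟨v, hv, rfl⟩, hwv⟩

end Words

section Core

variable {F : Type*} [Group F] {Q R : Set F} {Φ : Set (Monoid.End F)}

theorem mem_lKernel_of_mem {q : F} (hq : q ∈ Q) : q ∈ lKernel Q R Φ :=
  Subgroup.subset_normalClosure (Or.inl hq)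

theorem apply_mem_lKernel {σ : Monoid.End F} (hσ : σ ∈ Submonoid.closure Φ) {r : F}
    (hr : r ∈ R) : σ r ∈ lKernel Q R Φ :=
  Subgroup.subset_normalClosure (Or.inr (Set.mem_biUnion hσ ⟨r, hr, rfl⟩))

theorem conj_apply_eq (β : Monoid.End F) (t x : F) :
    t * β x * t⁻¹ = (t * (β t)⁻¹) * β (t * x * t⁻¹) * (t * (β t)⁻¹)⁻¹ := by
  simp only [map_mul, map_inv]
  group

theorem Subgroup.conj_mem_map_subtype {H : Subgroup F} {K : Subgroup H} [K.Normal] {h k : F}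
    (hh : h ∈ H) (hk : k ∈ K.map H.subtype) : h * k * h⁻¹ ∈ K.map H.subtype := by
  obtain ⟨k, hk, rfl⟩ := hk
  exact ⟨⟨h, hh⟩ * k * ⟨h, hh⟩⁻¹, ‹K.Normal›.conj_mem k hk _, rfl⟩

/-- The `L`-presentation over `H` with relators `T Q T⁻¹`, `T P(R) T⁻¹` and with the restrictions
to `H` of the endomorphisms in `L` as substitutions. -/
def transversalLKernel (H : Subgroup F) (T Q R : Set F) (P L : Set (Monoid.End F)) :
    Subgroup H :=
  lKernel (Subtype.val ⁻¹' Set.image2 (fun t q => t * q * t⁻¹) T Q)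
    (Subtype.val ⁻¹' Set.image2 (fun t r => t * r * t⁻¹) T (Set.image2 (· ·) P R))
    (H.restrictEnd '' (Subtype.val ⁻¹' L))

instance transversalLKernel_normal (H : Subgroup F) (T Q R : Set F) (P L : Set (Monoid.End F)) :
    (transversalLKernel H T Q R P L).Normal :=
  lKernel_normal _ _ _

variable {H : Subgroup F} {T : Set F} {P L : Set (Monoid.End F)}

theorem le_map_transversalLKernel (hNH : lKernel Q R Φ ≤ H) (hT : ∀ g, ∃ t ∈ T, g * t⁻¹ ∈ H)
    (hP : P ⊆ Submonoid.closure Φ) (hLH : L ⊆ (rightCosetRep H).endStabilizer)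
    (hfact : ∀ σ ∈ Submonoid.closure Φ, ∃ β ∈ Submonoid.closure L, ∃ p ∈ P, σ = β * p) :
    lKernel Q R Φ ≤ (transversalLKernel H T Q R P L).map H.subtype := by
  refine Subgroup.normalClosure_le_of_forall_conj_mem hT
    (fun h hh k hk => Subgroup.conj_mem_map_subtype hh hk) ?_
  rintro t ht s (hq | hs)
  · have hqN : t * s * t⁻¹ ∈ lKernel Q R Φ :=
      (lKernel_normal _ _ _).conj_mem _ (mem_lKernel_of_mem hq) t
    exact ⟨⟨_, hNH hqN⟩, mem_lKernel_of_mem ⟨t, ht, s, hq, rfl⟩, rfl⟩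
  obtain ⟨σ, hσ, r, hr, rfl⟩ := Set.mem_iUnion₂.mp hs
  obtain ⟨β, hβ, p, hp, rfl⟩ := hfact σ hσ
  have hβH : β ∈ (rightCosetRep H).endStabilizer := Submonoid.closure_le.mpr hLH hβ
  have hyN : t * p r * t⁻¹ ∈ lKernel Q R Φ :=
    (lKernel_normal _ _ _).conj_mem _ (apply_mem_lKernel (hP hp) hr) t
  let β' : H.invariantEnd := ⟨β, endStabilizer_rightCosetRep_le_invariantEnd hβH⟩
  have hβy : H.restrictEnd β' ⟨_, hNH hyN⟩ ∈ transversalLKernel H T Q R P L :=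
    apply_mem_lKernel
      (Subgroup.restrictEnd_mem_closure_image
        (hLH.trans endStabilizer_rightCosetRep_le_invariantEnd) hβ)
      ⟨t, ht, p r, ⟨p, hp, r, hr, rfl⟩, rfl⟩
  change t * β (p r) * t⁻¹ ∈ _
  rw [conj_apply_eq]
  refine Subgroup.conj_mem_map_subtype ?_ ⟨_, hβy, rfl⟩
  simpa using inv_mem (mul_inv_mem_of_mem_endStabilizer hβH t)

theorem transversalLKernel_le_subgroupOf (hP : P ⊆ Submonoid.closure Φ)
    (hLN : L ⊆ (lKernel Q R Φ).invariantEnd) :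
    transversalLKernel H T Q R P L ≤ (lKernel Q R Φ).subgroupOf H := by
  refine Subgroup.normalClosure_le_normal ?_
  rintro x (⟨t, -, q, hq, hx⟩ | hx)
  · rw [SetLike.mem_coe, Subgroup.mem_subgroupOf, ← hx]
    exact (lKernel_normal _ _ _).conj_mem _ (mem_lKernel_of_mem hq) t
  obtain ⟨ρ, hρ, y, ⟨t, -, _, ⟨p, hp, r, hr, rfl⟩, hy⟩, rfl⟩ := Set.mem_iUnion₂.mp hx
  obtain ⟨σ, hσ, rfl⟩ := Subgroup.exists_restrictEnd_eq_of_mem_closure hρ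
  rw [SetLike.mem_coe, Subgroup.mem_subgroupOf, Subgroup.coe_restrictEnd_apply, ← hy]
  exact Submonoid.closure_le.mpr hLN hσ _
    ((lKernel_normal _ _ _).conj_mem _ (apply_mem_lKernel (hP hp) hr) t)

theorem lKernel_subgroupOf_eq (hNH : lKernel Q R Φ ≤ H) (hT : ∀ g, ∃ t ∈ T, g * t⁻¹ ∈ H)
    (hP : P ⊆ Submonoid.closure Φ) (hLN : L ⊆ (lKernel Q R Φ).invariantEnd)
    (hLH : L ⊆ (rightCosetRep H).endStabilizer)
    (hfact : ∀ σ ∈ Submonoid.closure Φ, ∃ β ∈ Submonoid.closure L, ∃ p ∈ P, σ = β * p) :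
    (lKernel Q R Φ).subgroupOf H = transversalLKernel H T Q R P L := by
  refine le_antisymm ?_ (transversalLKernel_le_subgroupOf hP hLN)
  rw [← Subgroup.map_subtype_le_map_subtype, Subgroup.subgroupOf_map_subtype, inf_of_le_left hNH]
  exact le_map_transversalLKernel hNH hT hP hLH hfact

end Core

section Transport

variable {G G' : Type*} [Group G] [Group G']

def MulEquiv.monoidEndCongr (e : G ≃* G') : _root_.Monoid.End G ≃* _root_.Monoid.End G' where
  toFun σ :=
    { toFun x := e (σ (e.symm x))
      map_one' := by simp
      map_mul' := by simp }
  invFun σ :=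
    { toFun x := e.symm (σ (e x))
      map_one' := by simp
      map_mul' := by simp }
  left_inv σ := DFunLike.ext _ _ fun x => by
    change e.symm (e (σ (e.symm (e x)))) = σ x
    simp
  right_inv σ := DFunLike.ext _ _ fun x => by
    change e (e.symm (σ (e (e.symm x)))) = σ x
    simp
  map_mul' σ τ := DFunLike.ext _ _ fun x => by
    change e (σ (τ (e.symm x))) = e (σ (e.symm (e (τ (e.symm x)))))
    simp

@[simp]
theorem MulEquiv.monoidEndCongr_apply_apply (e : G ≃* G') (σ : _root_.Monoid.End G) (x : G') :
    e.monoidEndCongr σ x = e (σ (e.symm x)) :=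
  rfl

theorem lKernel_map_mulEquiv (e : G ≃* G') (Q R : Set G) (Φ : Set (Monoid.End G)) :
    (lKernel Q R Φ).map (e : G →* G') =
      lKernel (e '' Q) (e '' R) (e.monoidEndCongr '' Φ) := by
  rw [lKernel, Subgroup.map_normalClosure _ _ e.surjective, lKernel,
    ← MonoidHom.map_mclosure e.monoidEndCongr]
  congr 1
  ext x
  simp only [Set.image_union, Set.image_iUnion₂, Set.mem_union, Set.mem_iUnion₂, Set.mem_image,
    Submonoid.mem_map, exists_prop]
  aesop

theorem IsInvariantlyFinitelyLPresented.of_mulEquiv (e : G ≃* G')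
    (h : IsInvariantlyFinitelyLPresented G') : IsInvariantlyFinitelyLPresented G := by
  obtain ⟨n, Q, R, Φ, hinv, ⟨e'⟩⟩ := h
  exact ⟨n, Q, R, Φ, hinv, ⟨e.trans e'⟩⟩

theorem isInvariantlyFinitelyLPresented_quotient_lKernel {m : ℕ} (e : FreeGroup (Fin m) ≃* G)
    {Q R : Set G} {Φ : Set (Monoid.End G)} (hQ : Q.Finite) (hR : R.Finite) (hΦ : Φ.Finite)
    (hinv : Φ ⊆ (lKernel Q R Φ).invariantEnd) :
    IsInvariantlyFinitelyLPresented (G ⧸ lKernel Q R Φ) := by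
  have hK : lpresKernel ↑(hQ.image e.symm).toFinset ↑(hR.image e.symm).toFinset
      ↑(hΦ.image e.symm.monoidEndCongr).toFinset =
        (lKernel Q R Φ).map (e.symm : G →* FreeGroup (Fin m)) := by
    simp only [Set.Finite.coe_toFinset, lpresKernel_eq_lKernel, lKernel_map_mulEquiv]
  refine ⟨m, _, _, _, ?_, ⟨QuotientGroup.congr _ _ e.symm hK.symm⟩⟩
  rw [hK]
  intro σ' hσ' g hg
  obtain ⟨σ, hσ, rfl⟩ := by simpa using hσ'
  obtain ⟨x, hx, rfl⟩ := hg
  exact ⟨σ x, hinv hσ x hx, by simp⟩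

end Transport

theorem finite_of_fg_freeGroup {α : Type*} [Group.FG (FreeGroup α)] : Finite α := by
  have : Group.FG (Abelianization (FreeGroup α)) :=
    Group.fg_of_surjective (f := Abelianization.of) QuotientGroup.mk_surjective
  have : Module.Finite ℤ (FreeAbelianGroup α) :=
    Module.Finite.iff_addGroup_fg.mpr (AddGroup.fg_of_group_fg (G := Abelianization (FreeGroup α)))
  exact Module.Finite.finite_basis (FreeAbelianGroup.basis α)

theorem IsFreeGroup.exists_mulEquiv_freeGroup_fin (G : Type*) [Group G] [IsFreeGroup G]
    [Group.FG G] : ∃ m, Nonempty (FreeGroup (Fin m) ≃* G) := by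
  have : Group.FG (FreeGroup (IsFreeGroup.Generators G)) :=
    Group.fg_of_surjective (f := (IsFreeGroup.toFreeGroup G).toMonoidHom)
      (IsFreeGroup.toFreeGroup G).surjective
  have := finite_of_fg_freeGroup (α := IsFreeGroup.Generators G)
  obtain ⟨m, ⟨em⟩⟩ := Finite.exists_equiv_fin (IsFreeGroup.Generators G)
  exact ⟨m, ⟨(FreeGroup.freeGroupCongr em.symm).trans (IsFreeGroup.toFreeGroup G).symm⟩⟩

noncomputable def Subgroup.quotientSubgroupOfEquivMap {G : Type*} [Group G] (N H : Subgroup G)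
    [N.Normal] :
    H ⧸ N.subgroupOf H ≃* H.map (QuotientGroup.mk' N) :=
  (QuotientGroup.quotientMulEquivOfEq (by
      rw [← MonoidHom.comap_ker, QuotientGroup.ker_mk']; rfl)).trans
    ((QuotientGroup.quotientKerEquivRange ((QuotientGroup.mk' N).comp H.subtype)).trans
      (MulEquiv.subgroupCongr (by rw [MonoidHom.range_comp, Subgroup.range_subtype])))

theorem isInvariantlyFinitelyLPresented_quotient_subgroupOf {F : Type*} [Group F]
    {H N : Subgroup F} [N.Normal] {m : ℕ} (e : FreeGroup (Fin m) ≃* H) {T Q R : Set F}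
    {P L : Set (Monoid.End F)} (hT : T.Finite) (hQ : Q.Finite) (hR : R.Finite) (hP : P.Finite)
    (hL : L.Finite) (hLN : L ⊆ N.invariantEnd)
    (hNH : N.subgroupOf H = transversalLKernel H T Q R P L) :
    IsInvariantlyFinitelyLPresented (H ⧸ N.subgroupOf H) := by
  refine .of_mulEquiv (QuotientGroup.quotientMulEquivOfEq hNH)
    (isInvariantlyFinitelyLPresented_quotient_lKernel e
      ((hT.image2 _ hQ).preimage Subtype.val_injective.injOn)
      ((hT.image2 _ (hP.image2 _ hR)).preimage Subtype.val_injective.injOn)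
      ((hL.preimage Subtype.val_injective.injOn).image _) ?_)
  rintro _ ⟨σ, hσ, rfl⟩
  change _ ∈ (transversalLKernel H T Q R P L).invariantEnd
  rw [← hNH]
  exact Subgroup.restrictEnd_mem_invariantEnd_subgroupOf (hLN hσ)

theorem leafInvariant_subgroup_isInvariantlyFinitelyLPresented_general
    (n : ℕ) (Q R : Finset (FreeGroup (Fin n)))
    (Φ : Finset (Monoid.End (FreeGroup (Fin n))))
    (N : Subgroup (FreeGroup (Fin n))) (hNn : N.Normal)
    (hN : N = lpresKernel (Q : Set _) (R : Set _) (Φ : Set _))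
    (hinv : ∀ σ ∈ Φ, ∀ g ∈ N, σ g ∈ N)
    (H : Subgroup (FreeGroup (Fin n))) (hHfi : H.FiniteIndex) (hNH : N ≤ H)
    (φ : FreeGroup (Fin n) →* Equiv.Perm (Quotient (QuotientGroup.rightRel H)))
    (hφ : φ = rightCosetRep H)
    (V : Finset (List (Monoid.End (FreeGroup (Fin n)))))
    (hVword : ∀ w ∈ V, ∀ ψ ∈ w, ψ ∈ Φ)
    (hVnil : ([] : List (Monoid.End (FreeGroup (Fin n)))) ∈ V)
    (hleaf : ∀ ψ ∈ Φ, ∀ δ ∈ V, ψ :: δ ∉ V →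
      φ.comp (wordHat (ψ :: δ) : FreeGroup (Fin n) →* FreeGroup (Fin n)) = φ) :
    IsInvariantlyFinitelyLPresented (H.map (QuotientGroup.mk' N)) := by
  subst hφ
  rw [lpresKernel_eq_lKernel] at hN
  subst hN
  set L := leafEnds (Φ : Set (Monoid.End (FreeGroup (Fin n)))) (V : Set (List _))
  have hLN : L ⊆ (lKernel (Q : Set (FreeGroup (Fin n))) R Φ).invariantEnd :=
    (leafEnds_subset_closure hVword).trans (Submonoid.closure_le.mpr hinv)
  have hLH : L ⊆ (rightCosetRep H).endStabilizer := by
    rintro _ ⟨ψ, hψ, δ, hδ, hψδ, rfl⟩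
    exact hleaf ψ hψ δ hδ hψδ
  obtain ⟨T, hTfin, hT⟩ := H.exists_finite_forall_mul_inv_mem
  obtain ⟨m, ⟨e⟩⟩ := IsFreeGroup.exists_mulEquiv_freeGroup_fin H
  have hH := lKernel_subgroupOf_eq hNH hT (P := wordHat '' (V : Set _))
    (Set.image_subset_iff.mpr fun v hv => wordHat_mem_closure (hVword v hv)) hLN hLH
    fun σ hσ => exists_eq_mul_of_mem_closure hVnil hσ
  exact .of_mulEquiv (Subgroup.quotientSubgroupOfEquivMap _ H).symm
    (isInvariantlyFinitelyLPresented_quotient_subgroupOf e hTfin Q.finite_toSet R.finite_toSet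
      (V.finite_toSet.image _) (leafEnds_finite Φ.finite_toSet V.finite_toSet) hLN hH)

/-- Theorem 7.1: a leaf-invariant finite index subgroup of an invariantly finitely
`L`-presented group is invariantly finitely `L`-presented.  Here `G = F/N` is
presented by the invariant finite `L`-presentation `(X, Q, Φ, R)`, `H ≤ F` has
finite index with `N ⊆ H`, `φ` is the permutation representation of `F` on the right
cosets of `H`, words over `Φ` are lists (with `ŵ` applying the first letter first),
and the subgroup `H/N` is leaf-invariant with respect to the finite set of words `V`
which contains the empty word, is closed under deleting the first letter, and on
which `v ↦ φ∘v̂` is injective. -/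
theorem leafInvariant_subgroup_isInvariantlyFinitelyLPresented
    (n : ℕ) (Q R : Finset (FreeGroup (Fin n)))
    (Φ : Finset (Monoid.End (FreeGroup (Fin n))))
    (N : Subgroup (FreeGroup (Fin n))) (hNn : N.Normal)
    (hN : N = lpresKernel (Q : Set _) (R : Set _) (Φ : Set _))
    (hinv : ∀ σ ∈ Φ, ∀ g ∈ N, σ g ∈ N)
    (H : Subgroup (FreeGroup (Fin n))) (hHfi : H.FiniteIndex) (hNH : N ≤ H)
    (φ : FreeGroup (Fin n) →* Equiv.Perm (Quotient (QuotientGroup.rightRel H)))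
    (hφ : φ = rightCosetRep H)
    (V : Finset (List (Monoid.End (FreeGroup (Fin n)))))
    (hVword : ∀ w ∈ V, ∀ ψ ∈ w, ψ ∈ Φ)
    (hVnil : ([] : List (Monoid.End (FreeGroup (Fin n)))) ∈ V)
    (hVtail : ∀ (ψ : Monoid.End (FreeGroup (Fin n)))
      (δ : List (Monoid.End (FreeGroup (Fin n)))), ψ :: δ ∈ V → δ ∈ V)
    (hVinj : Set.InjOn (fun w => φ.comp (wordHat w : FreeGroup (Fin n) →* FreeGroup (Fin n)))
      (V : Set (List (Monoid.End (FreeGroup (Fin n))))))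
    (hVcover : ∀ w : List (Monoid.End (FreeGroup (Fin n))), (∀ ψ ∈ w, ψ ∈ Φ) →
      ∃ v ∈ V, φ.comp (wordHat w : FreeGroup (Fin n) →* FreeGroup (Fin n)) =
        φ.comp (wordHat v : FreeGroup (Fin n) →* FreeGroup (Fin n)))
    (hleaf : ∀ ψ ∈ Φ, ∀ δ ∈ V, ψ :: δ ∉ V →
      φ.comp (wordHat (ψ :: δ) : FreeGroup (Fin n) →* FreeGroup (Fin n)) = φ) :
    IsInvariantlyFinitelyLPresented (H.map (QuotientGroup.mk' N)) :=
  leafInvariant_subgroup_isInvariantlyFinitelyLPresented_general n Q R Φ N hNn hN hinv H hHfi hNH φ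
    hφ V hVword hVnil hleaf
end

section
/- Let G = F/N be the group presented by a finite L-presentation (X, Q, Φ, R), and let M be a normal subgroup of G which is finitely generated as a normal subgroup (i.e., M is the normal closure in G of finitely many elements). Then G/M is finitely L-presented. If moreover the L-presentation is invariant (σ(N) ⊆ N for all σ ∈ Φ) and M is invariant under each endomorphism of G induced by the elements of Φ, then G/M is invariantly finitely L-presented. -/
/-! Enlarging `Q` by a set `T` enlarges the kernel by the normal closure of `T`. Taking for `T`
lifts to `F` of finitely many normal generators of `M`, the new kernel is the preimage of `M`
in `F`, so by the third isomorphism theorem the enlarged finite `L`-presentation presents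
`(F/N)/M`; its kernel is invariant exactly when the preimage of `M` is. -/

theorem lpresKernel_union_left {X : Type} (Q T R : Set (FreeGroup X))
    (Φ : Set (Monoid.End (FreeGroup X))) :
    lpresKernel (Q ∪ T) R Φ = lpresKernel Q R Φ ⊔ Subgroup.normalClosure T := by
  rw [lpresKernel, lpresKernel, ← Subgroup.normalClosure_union, Set.union_right_comm]

namespace QuotientGroup

variable {G : Type*} [Group G] (N : Subgroup G) [N.Normal]

theorem comap_mk'_normalClosure_image (T : Set G) :
    (Subgroup.normalClosure (mk' N '' T)).comap (mk' N) = N ⊔ Subgroup.normalClosure T := by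
  rw [← Subgroup.map_normalClosure _ _ (mk'_surjective N), comap_map_mk']

def quotientQuotientEquivQuotientComap (M : Subgroup (G ⧸ N)) [M.Normal] :
    (G ⧸ N) ⧸ M ≃* G ⧸ M.comap (mk' N) :=
  have hM : (M.comap (mk' N)).map (mk' N) = M :=
    Subgroup.map_comap_eq_self_of_surjective (mk'_surjective N) M
  have : ((M.comap (mk' N)).map (mk' N)).Normal := hM ▸ inferInstance
  (quotientMulEquivOfEq hM.symm).trans (quotientQuotientEquivQuotient N _ (le_comap_mk' N M))

end QuotientGroup

open QuotientGroup in
/-- Proposition 2.6: if `G = F/N` is presented by a finite `L`-presentation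
`(X, Q, Φ, R)` and `M ⊴ G` is finitely generated as a normal subgroup, then `G/M`
is finitely `L`-presented.  If moreover the `L`-presentation is invariant and `M`
is invariant under the endomorphisms of `G` induced by the elements of `Φ` (each of
which stabilizes `N`, hence the preimage of `M` in `F` is invariant), then
`G/M` is invariantly finitely `L`-presented. -/
theorem quotient_by_finitelyNormallyGenerated_isFinitelyLPresented
    (n : ℕ) (Q R : Finset (FreeGroup (Fin n)))
    (Φ : Finset (Monoid.End (FreeGroup (Fin n))))
    (N : Subgroup (FreeGroup (Fin n))) (hNn : N.Normal)
    (hN : N = lpresKernel (Q : Set _) (R : Set _) (Φ : Set _))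
    (M : Subgroup (FreeGroup (Fin n) ⧸ N)) (hMn : M.Normal)
    (hfg : ∃ S : Finset (FreeGroup (Fin n) ⧸ N), M = Subgroup.normalClosure (S : Set _)) :
    IsFinitelyLPresented ((FreeGroup (Fin n) ⧸ N) ⧸ M) ∧
    ((∀ σ ∈ Φ, ∀ g ∈ N, σ g ∈ N) →
     (∀ σ ∈ Φ, ∀ g ∈ M.comap (QuotientGroup.mk' N), σ g ∈ M.comap (QuotientGroup.mk' N)) →
     IsInvariantlyFinitelyLPresented ((FreeGroup (Fin n) ⧸ N) ⧸ M)) := by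
  obtain ⟨S, rfl⟩ := hfg
  set T : Finset (FreeGroup (Fin n)) := S.image Quotient.out
  have hT : mk' N '' (T : Set _) = S := by
    simp only [T, Finset.coe_image, Set.image_image, mk'_apply, out_eq', Set.image_id']
  have hker : lpresKernel (↑(Q ∪ T)) R Φ = (Subgroup.normalClosure (S : Set _)).comap (mk' N) := by
    rw [Finset.coe_union, lpresKernel_union_left, ← hN, ← hT, comap_mk'_normalClosure_image]
  have e := (quotientQuotientEquivQuotientComap N _).trans (quotientMulEquivOfEq hker.symm)
  refine ⟨⟨n, Q ∪ T, R, Φ, ⟨e⟩⟩, fun _ hM => ⟨n, Q ∪ T, R, Φ, by rwa [hker], ⟨e⟩⟩⟩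
end

section
/- Let G and H be finitely L-presented groups and let F be a finitely generated group together with injective homomorphisms ψ : F → G and φ : F → H. Then the amalgamated free product G *_F H is finitely L-presented. -/
open Subgroup

def lpresRels {X : Type} (Q R : Set (FreeGroup X)) (Φ : Set (Monoid.End (FreeGroup X))) :
    Set (FreeGroup X) :=
  Q ∪ ⋃ σ ∈ Submonoid.closure Φ, ⇑σ '' R

theorem lpresKernel_eq_normalClosure {X : Type} (Q R : Set (FreeGroup X))
    (Φ : Set (Monoid.End (FreeGroup X))) : lpresKernel Q R Φ = normalClosure (lpresRels Q R Φ) :=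
  rfl

def Monoid.End.congr {M N : Type*} [Monoid M] [Monoid N] (E : M ≃* N) :
    Monoid.End M →* Monoid.End N where
  toFun σ := (E.toMonoidHom.comp σ).comp E.symm.toMonoidHom
  map_one' := DFunLike.ext _ _ fun y => E.apply_symm_apply y
  map_mul' σ τ := DFunLike.ext _ _ fun y =>
    congrArg (fun z => E (σ z)) (E.symm_apply_apply (τ (E.symm y))).symm

theorem Monoid.End.congr_apply_apply {M N : Type*} [Monoid M] [Monoid N] (E : M ≃* N)
    (σ : Monoid.End M) (x : M) : Monoid.End.congr E σ (E x) = E (σ x) :=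
  congrArg (fun z => E (σ z)) (E.symm_apply_apply x)

theorem map_lpresKernel_mulEquiv {X Y : Type} (E : FreeGroup X ≃* FreeGroup Y)
    (Q R : Set (FreeGroup X)) (Φ : Set (Monoid.End (FreeGroup X))) :
    (lpresKernel Q R Φ).map (E : FreeGroup X →* FreeGroup Y) =
      lpresKernel (E '' Q) (E '' R) (Monoid.End.congr E '' Φ) := by
  rw [lpresKernel, lpresKernel, map_normalClosure _ _ E.surjective, Set.image_union,
    ← MonoidHom.map_mclosure]
  congr 2
  ext y
  simp only [Set.mem_image, Set.mem_iUnion, Submonoid.mem_map, exists_prop]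
  constructor
  · rintro ⟨_, ⟨σ, hσ, r, hr, rfl⟩, rfl⟩
    exact ⟨_, ⟨σ, hσ, rfl⟩, E r, ⟨r, hr, rfl⟩, Monoid.End.congr_apply_apply E σ r⟩
  · rintro ⟨_, ⟨σ, hσ, rfl⟩, _, ⟨r, hr, rfl⟩, rfl⟩
    exact ⟨σ r, ⟨σ, hσ, r, hr, rfl⟩, (Monoid.End.congr_apply_apply E σ r).symm⟩

theorem IsFinitelyLPresented.of_surjective {X : Type} [Finite X] {P : Type*} [Group P]
    (π : FreeGroup X →* P) (hπ : Function.Surjective π) (Q R : Finset (FreeGroup X))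
    (Φ : Finset (Monoid.End (FreeGroup X))) (hker : π.ker = lpresKernel Q R Φ) :
    IsFinitelyLPresented P := by
  classical
  let E := FreeGroup.freeGroupCongr (Finite.equivFin X)
  refine ⟨Nat.card X, Q.image E, R.image E, Φ.image (Monoid.End.congr E), ⟨?_⟩⟩
  refine (QuotientGroup.quotientKerEquivOfSurjective π hπ).symm.trans
    (QuotientGroup.congr _ _ E ?_)
  simp only [hker, map_lpresKernel_mulEquiv, Finset.coe_image]

theorem IsFinitelyLPresented.exists_surjective {G : Type*} [Group G]
    (hG : IsFinitelyLPresented G) :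
    ∃ (n : ℕ) (Q R : Finset (FreeGroup (Fin n))) (Φ : Finset (Monoid.End (FreeGroup (Fin n))))
      (p : FreeGroup (Fin n) →* G), Function.Surjective p ∧ p.ker = lpresKernel Q R Φ := by
  obtain ⟨n, Q, R, Φ, ⟨e⟩⟩ := hG
  refine ⟨n, Q, R, Φ, e.symm.toMonoidHom.comp (QuotientGroup.mk' _), ?_, ?_⟩
  · exact e.symm.surjective.comp (QuotientGroup.mk'_surjective _)
  · exact (MonoidHom.ker_mulEquiv_comp _ e.symm).trans (QuotientGroup.ker_mk' _)

namespace FreeGroup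

variable {X Y : Type*}

def sumEnd (p : Monoid.End (FreeGroup X) × Monoid.End (FreeGroup Y)) :
    Monoid.End (FreeGroup (X ⊕ Y)) :=
  lift (Sum.elim (fun x => map Sum.inl (p.1 (of x))) fun y => map Sum.inr (p.2 (of y)))

theorem sumEnd_map_inl (p : Monoid.End (FreeGroup X) × Monoid.End (FreeGroup Y))
    (u : FreeGroup X) : sumEnd p (map Sum.inl u) = map Sum.inl (p.1 u) := by
  induction u using FreeGroup.induction_on with
  | C1 => simp
  | of x => exact lift_apply_of
  | inv_of x h => simp_all
  | mul u t hu ht => simp_all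

theorem sumEnd_map_inr (p : Monoid.End (FreeGroup X) × Monoid.End (FreeGroup Y))
    (u : FreeGroup Y) : sumEnd p (map Sum.inr u) = map Sum.inr (p.2 u) := by
  induction u using FreeGroup.induction_on with
  | C1 => simp
  | of x => exact lift_apply_of
  | inv_of x h => simp_all
  | mul u t hu ht => simp_all

theorem end_ext {α : Type*} {f g : Monoid.End (FreeGroup α)} (h : ∀ a, f (of a) = g (of a)) :
    f = g :=
  ext_hom f g h

def sumEndHom :
    Monoid.End (FreeGroup X) × Monoid.End (FreeGroup Y) →* Monoid.End (FreeGroup (X ⊕ Y)) where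
  toFun := sumEnd
  map_one' := end_ext <| by
    rintro (x | y)
    · exact sumEnd_map_inl 1 (of x)
    · exact sumEnd_map_inr 1 (of y)
  map_mul' p q := end_ext <| by
    rintro (x | y)
    · rw [← map.of, Monoid.End.coe_mul, Function.comp_apply, sumEnd_map_inl, sumEnd_map_inl,
        sumEnd_map_inl]
      rfl
    · rw [← map.of, Monoid.End.coe_mul, Function.comp_apply, sumEnd_map_inr, sumEnd_map_inr,
        sumEnd_map_inr]
      rfl

theorem closure_image_sumEndHom (s : Set (Monoid.End (FreeGroup X)))
    (t : Set (Monoid.End (FreeGroup Y))) :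
    Submonoid.closure (sumEndHom '' (insert 1 s ×ˢ insert 1 t)) =
      ((Submonoid.closure s).prod (Submonoid.closure t)).map sumEndHom := by
  rw [← MonoidHom.map_mclosure, Submonoid.closure_prod (Set.mem_insert _ _)
    (Set.mem_insert _ _), Submonoid.closure_insert_one, Submonoid.closure_insert_one]

end FreeGroup

open FreeGroup in
theorem lpresRels_sum {X Y : Type} (Q₁ R₁ : Set (FreeGroup X))
    (Φ₁ : Set (Monoid.End (FreeGroup X))) (Q₂ R₂ : Set (FreeGroup Y))
    (Φ₂ : Set (Monoid.End (FreeGroup Y))) (T : Set (FreeGroup (X ⊕ Y))) :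
    lpresRels (map Sum.inl '' Q₁ ∪ map Sum.inr '' Q₂ ∪ T) (map Sum.inl '' R₁ ∪ map Sum.inr '' R₂)
        (sumEndHom '' (insert 1 Φ₁ ×ˢ insert 1 Φ₂)) =
      map Sum.inl '' lpresRels Q₁ R₁ Φ₁ ∪ map Sum.inr '' lpresRels Q₂ R₂ Φ₂ ∪ T := by
  have orbits : ⋃ μ ∈ Submonoid.closure (sumEndHom '' (insert 1 Φ₁ ×ˢ insert 1 Φ₂)),
      ⇑μ '' (map Sum.inl '' R₁ ∪ map Sum.inr '' R₂) =
        map Sum.inl '' (⋃ σ ∈ Submonoid.closure Φ₁, ⇑σ '' R₁) ∪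
          map Sum.inr '' (⋃ τ ∈ Submonoid.closure Φ₂, ⇑τ '' R₂) := by
    rw [closure_image_sumEndHom]
    ext x
    simp only [Set.mem_iUnion, Set.mem_image, Set.mem_union, Submonoid.mem_map,
      Submonoid.mem_prod, exists_prop, Prod.exists]
    constructor
    · rintro ⟨_, ⟨σ, τ, ⟨hσ, hτ⟩, rfl⟩, _, (⟨r, hr, rfl⟩ | ⟨r, hr, rfl⟩), rfl⟩
      · exact Or.inl ⟨σ r, ⟨σ, hσ, r, hr, rfl⟩, (sumEnd_map_inl (σ, τ) r).symm⟩
      · exact Or.inr ⟨τ r, ⟨τ, hτ, r, hr, rfl⟩, (sumEnd_map_inr (σ, τ) r).symm⟩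
    · rintro (⟨_, ⟨σ, hσ, r, hr, rfl⟩, rfl⟩ | ⟨_, ⟨τ, hτ, r, hr, rfl⟩, rfl⟩)
      · exact ⟨_, ⟨σ, 1, ⟨hσ, one_mem _⟩, rfl⟩, _, Or.inl ⟨r, hr, rfl⟩, sumEnd_map_inl _ r⟩
      · exact ⟨_, ⟨1, τ, ⟨one_mem _, hτ⟩, rfl⟩, _, Or.inr ⟨r, hr, rfl⟩, sumEnd_map_inr _ r⟩
  rw [lpresRels, lpresRels, lpresRels, orbits, Set.image_union, Set.image_union]
  ext x
  simp only [Set.mem_union]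
  tauto

section Amalgam

open Monoid.Coprod

variable {X Y G H F : Type*} [Group G] [Group H] [Group F]

def amalgamRelators (ψ : F →* G) (φ : F →* H) : Set (Monoid.Coprod G H) :=
  {x | ∃ f : F, x = inl (ψ f) * (inr (φ f))⁻¹}

def amalgamProj (p₁ : FreeGroup X →* G) (p₂ : FreeGroup Y →* H) (ψ : F →* G) (φ : F →* H) :
    FreeGroup (X ⊕ Y) →* Monoid.Coprod G H ⧸ normalClosure (amalgamRelators ψ φ) :=
  (QuotientGroup.mk' _).comp <| FreeGroup.lift <|
    Sum.elim (fun x => inl (p₁ (FreeGroup.of x))) fun y => inr (p₂ (FreeGroup.of y))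

variable {p₁ : FreeGroup X →* G} {p₂ : FreeGroup Y →* H} {ψ : F →* G} {φ : F →* H}

theorem amalgamProj_map_inl (u : FreeGroup X) :
    amalgamProj p₁ p₂ ψ φ (FreeGroup.map Sum.inl u) = (inl (p₁ u) : Monoid.Coprod G H) := by
  induction u using FreeGroup.induction_on with
  | C1 => simp
  | of x => simp [amalgamProj]
  | inv_of x h => simp_all
  | mul u t hu ht => simp_all

theorem amalgamProj_map_inr (u : FreeGroup Y) :
    amalgamProj p₁ p₂ ψ φ (FreeGroup.map Sum.inr u) = (inr (p₂ u) : Monoid.Coprod G H) := by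
  induction u using FreeGroup.induction_on with
  | C1 => simp
  | of x => simp [amalgamProj]
  | inv_of x h => simp_all
  | mul u t hu ht => simp_all

theorem amalgamProj_surjective (hp₁ : Function.Surjective p₁) (hp₂ : Function.Surjective p₂) :
    Function.Surjective (amalgamProj p₁ p₂ ψ φ) := by
  intro z
  obtain ⟨y, rfl⟩ := QuotientGroup.mk_surjective z
  induction y using Monoid.Coprod.induction_on with
  | inl g =>
    obtain ⟨u, rfl⟩ := hp₁ g
    exact ⟨FreeGroup.map Sum.inl u, amalgamProj_map_inl u⟩
  | inr h =>
    obtain ⟨u, rfl⟩ := hp₂ h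
    exact ⟨FreeGroup.map Sum.inr u, amalgamProj_map_inr u⟩
  | mul x y hx hy =>
    obtain ⟨u, hu⟩ := hx
    obtain ⟨t, ht⟩ := hy
    exact ⟨u * t, by rw [map_mul, hu, ht, QuotientGroup.mk_mul]⟩

def amalgamRels (rels₁ : Set (FreeGroup X)) (rels₂ : Set (FreeGroup Y)) (w : F → FreeGroup X)
    (v : F → FreeGroup Y) (S : Set F) : Set (FreeGroup (X ⊕ Y)) :=
  FreeGroup.map Sum.inl '' rels₁ ∪ FreeGroup.map Sum.inr '' rels₂ ∪
    (fun f => FreeGroup.map Sum.inl (w f) * (FreeGroup.map Sum.inr (v f))⁻¹) '' S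

variable {rels₁ : Set (FreeGroup X)} {rels₂ : Set (FreeGroup Y)} {S : Set F}
  {w : F → FreeGroup X} {v : F → FreeGroup Y}

theorem normalClosure_le_ker_amalgamProj (hk₁ : p₁.ker = normalClosure rels₁)
    (hk₂ : p₂.ker = normalClosure rels₂) (hw : ∀ f ∈ S, p₁ (w f) = ψ f)
    (hv : ∀ f ∈ S, p₂ (v f) = φ f) :
    normalClosure (amalgamRels rels₁ rels₂ w v S) ≤ (amalgamProj p₁ p₂ ψ φ).ker := by
  refine normalClosure_le_normal ?_
  rintro _ ((⟨r, hr, rfl⟩ | ⟨r, hr, rfl⟩) | ⟨f, hf, rfl⟩)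
  · have : p₁ r = 1 := by rw [← MonoidHom.mem_ker, hk₁]; exact subset_normalClosure hr
    rw [SetLike.mem_coe, MonoidHom.mem_ker, amalgamProj_map_inl, this, map_one,
      QuotientGroup.mk_one]
  · have : p₂ r = 1 := by rw [← MonoidHom.mem_ker, hk₂]; exact subset_normalClosure hr
    rw [SetLike.mem_coe, MonoidHom.mem_ker, amalgamProj_map_inr, this, map_one,
      QuotientGroup.mk_one]
  · rw [SetLike.mem_coe, MonoidHom.mem_ker, map_mul, map_inv, amalgamProj_map_inl,
      amalgamProj_map_inr, hw f hf, hv f hf, ← QuotientGroup.mk_inv, ← QuotientGroup.mk_mul,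
      QuotientGroup.eq_one_iff]
    exact subset_normalClosure ⟨f, rfl⟩

theorem ker_amalgamProj_le (hp₁ : Function.Surjective p₁) (hk₁ : p₁.ker = normalClosure rels₁)
    (hp₂ : Function.Surjective p₂) (hk₂ : p₂.ker = normalClosure rels₂) (hS : closure S = ⊤)
    (hw : ∀ f ∈ S, p₁ (w f) = ψ f) (hv : ∀ f ∈ S, p₂ (v f) = φ f) :
    (amalgamProj p₁ p₂ ψ φ).ker ≤ normalClosure (amalgamRels rels₁ rels₂ w v S) := by
  set L := normalClosure (amalgamRels rels₁ rels₂ w v S)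
  have h₁ : p₁.ker ≤ ((QuotientGroup.mk' L).comp (FreeGroup.map Sum.inl)).ker :=
    hk₁ ▸ normalClosure_le_normal fun r hr => (QuotientGroup.eq_one_iff _).mpr
      (subset_normalClosure (Or.inl (Or.inl ⟨r, hr, rfl⟩)))
  have h₂ : p₂.ker ≤ ((QuotientGroup.mk' L).comp (FreeGroup.map Sum.inr)).ker :=
    hk₂ ▸ normalClosure_le_normal fun r hr => (QuotientGroup.eq_one_iff _).mpr
      (subset_normalClosure (Or.inl (Or.inr ⟨r, hr, rfl⟩)))
  -- The universal properties of `G`, `H` and the amalgam yield a left inverse `ρ` of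
  -- `amalgamProj` modulo `L`.
  let a := p₁.liftOfSurjective hp₁ ⟨_, h₁⟩
  let b := p₂.liftOfSurjective hp₂ ⟨_, h₂⟩
  have ha (u : FreeGroup X) : a (p₁ u) = QuotientGroup.mk' L (FreeGroup.map Sum.inl u) :=
    p₁.liftOfRightInverse_comp_apply _ _ ⟨_, h₁⟩ u
  have hb (u : FreeGroup Y) : b (p₂ u) = QuotientGroup.mk' L (FreeGroup.map Sum.inr u) :=
    p₂.liftOfRightInverse_comp_apply _ _ ⟨_, h₂⟩ u
  have hab : a.comp ψ = b.comp φ := MonoidHom.eq_of_eqOn_dense hS fun f hf => by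
    rw [MonoidHom.comp_apply, MonoidHom.comp_apply, ← hw f hf, ← hv f hf, ha, hb,
      QuotientGroup.mk'_apply, QuotientGroup.mk'_apply, QuotientGroup.eq_iff_div_mem,
      div_eq_mul_inv]
    exact subset_normalClosure (Or.inr ⟨f, hf, rfl⟩)
  have hN : normalClosure (amalgamRelators ψ φ) ≤ (Monoid.Coprod.lift a b).ker := by
    refine normalClosure_le_normal ?_
    rintro _ ⟨f, rfl⟩
    rw [SetLike.mem_coe, MonoidHom.mem_ker, map_mul, map_inv, lift_apply_inl, lift_apply_inr,
      mul_inv_eq_one]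
    exact DFunLike.congr_fun hab f
  let ρ := QuotientGroup.lift _ _ hN
  have hρ : ρ.comp (amalgamProj p₁ p₂ ψ φ) = QuotientGroup.mk' L := by
    refine FreeGroup.ext_hom _ _ ?_
    rintro (x | y)
    · rw [MonoidHom.comp_apply, ← FreeGroup.map.of, amalgamProj_map_inl]
      exact ha _
    · rw [MonoidHom.comp_apply, ← FreeGroup.map.of, amalgamProj_map_inr]
      exact hb _
  calc (amalgamProj p₁ p₂ ψ φ).ker ≤ (ρ.comp (amalgamProj p₁ p₂ ψ φ)).ker :=
        fun x hx => by rw [MonoidHom.mem_ker, MonoidHom.comp_apply, hx, map_one]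
    _ = L := by rw [hρ, QuotientGroup.ker_mk']

theorem ker_amalgamProj (hp₁ : Function.Surjective p₁) (hk₁ : p₁.ker = normalClosure rels₁)
    (hp₂ : Function.Surjective p₂) (hk₂ : p₂.ker = normalClosure rels₂) (hS : closure S = ⊤)
    (hw : ∀ f ∈ S, p₁ (w f) = ψ f) (hv : ∀ f ∈ S, p₂ (v f) = φ f) :
    (amalgamProj p₁ p₂ ψ φ).ker = normalClosure (amalgamRels rels₁ rels₂ w v S) :=
  le_antisymm (ker_amalgamProj_le hp₁ hk₁ hp₂ hk₂ hS hw hv)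
    (normalClosure_le_ker_amalgamProj hk₁ hk₂ hw hv)

end Amalgam

theorem amalgamatedFreeProduct_isFinitelyLPresented_general
    {G H F : Type*} [Group G] [Group H] [Group F]
    (hG : IsFinitelyLPresented G) (hH : IsFinitelyLPresented H)
    (hF : Group.FG F) (ψ : F →* G) (φ : F →* H) :
    IsFinitelyLPresented
      (Monoid.Coprod G H ⧸ Subgroup.normalClosure
        {x : Monoid.Coprod G H |
          ∃ f : F, x = Monoid.Coprod.inl (ψ f) * (Monoid.Coprod.inr (φ f))⁻¹}) := by
  classical
  change IsFinitelyLPresented (Monoid.Coprod G H ⧸ normalClosure (amalgamRelators ψ φ))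
  obtain ⟨n₁, Q₁, R₁, Φ₁, p₁, hp₁, hk₁⟩ := hG.exists_surjective
  obtain ⟨n₂, Q₂, R₂, Φ₂, p₂, hp₂, hk₂⟩ := hH.exists_surjective
  rw [lpresKernel_eq_normalClosure] at hk₁ hk₂
  obtain ⟨S, hS⟩ := hF.out
  choose w hw using fun f => hp₁ (ψ f)
  choose v hv using fun f => hp₂ (φ f)
  refine .of_surjective (amalgamProj p₁ p₂ ψ φ) (amalgamProj_surjective hp₁ hp₂)
    (Q₁.image (FreeGroup.map Sum.inl) ∪ Q₂.image (FreeGroup.map Sum.inr) ∪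
      S.image fun f => FreeGroup.map Sum.inl (w f) * (FreeGroup.map Sum.inr (v f))⁻¹)
    (R₁.image (FreeGroup.map Sum.inl) ∪ R₂.image (FreeGroup.map Sum.inr))
    ((insert 1 Φ₁ ×ˢ insert 1 Φ₂).image FreeGroup.sumEndHom) ?_
  rw [ker_amalgamProj hp₁ hk₁ hp₂ hk₂ hS (fun f _ => hw f) fun f _ => hv f]
  simp only [Finset.coe_union, Finset.coe_image, Finset.coe_product, Finset.coe_insert]
  rw [lpresKernel_eq_normalClosure, lpresRels_sum]
  rfl

/-- Corollary 2.7: if `G` and `H` are finitely `L`-presented groups, `F` is a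
finitely generated group, and `ψ : F → G`, `φ : F → H` are injective homomorphisms,
then the amalgamated free product `G *_F H` (the quotient of the free product `G * H`
by the normal closure of `{ψ(f)·φ(f)⁻¹ : f ∈ F}`) is finitely `L`-presented. -/
theorem amalgamatedFreeProduct_isFinitelyLPresented
    {G H F : Type*} [Group G] [Group H] [Group F]
    (hG : IsFinitelyLPresented G) (hH : IsFinitelyLPresented H)
    (hF : Group.FG F) (ψ : F →* G) (φ : F →* H)
    (hψ : Function.Injective ψ) (hφ : Function.Injective φ) :
    IsFinitelyLPresented
      (Monoid.Coprod G H ⧸ Subgroup.normalClosure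
        {x : Monoid.Coprod G H |
          ∃ f : F, x = Monoid.Coprod.inl (ψ f) * (Monoid.Coprod.inr (φ f))⁻¹}) :=
  amalgamatedFreeProduct_isFinitelyLPresented_general hG hH hF ψ φ
end
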